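/- For the multi-commodity structured tensor with K_{i₀i₁…i_T} = (∏_{t=2}^{T-1} (K_L)_{i₀ i_t})(∏_{t=1}^{T-1} K_{i_t i_{t+1}}) and U_{i₀…i_T} = U^{(0,1)}_{i₀i₁} U^{(0,T)}_{i₀i_T} ∏_{t=2}^{T-1} (u_t)_{i_t}, the bi-marginal projections satisfy: P_{0,1}(K⊙U) = U^{(0,1)} ⊙ Ψ₁, P_{0,T}(K⊙U) = U^{(0,T)} ⊙ Ψ̂_T, and P_{0,t}(K⊙U) = (Ψ̂_t ⊙ Ψ_t ⊙ K_L) diag(u_t) for t = 2,…,T−1, where Ψ̂₂ = U^{(0,1)}K, Ψ̂_t = (Ψ̂_{t−1} ⊙ K_L) diag(u_{t−1}) K for t = 3,…,T, and Ψ_{T−1} = U^{(0,T)} Kᵀ, Ψ_t = (Ψ_{t+1} ⊙ K_L) diag(u_{t+1}) Kᵀ for t = 1,…,T−2. -/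

import Mathlib

namespace Stmt12

/-- Forward matrix messages: `Ψ̂₂ = U^{(0,1)} K` and
`Ψ̂_t = (Ψ̂_{t−1} ⊙ K_L) diag(u_{t−1}) K` (here `psihatM m = Ψ̂_{m+2}`). -/
def psihatM (L n : ℕ) (KL : Fin L → Fin n → ℝ) (Km : Matrix (Fin n) (Fin n) ℝ)
    (U01 : Fin L → Fin n → ℝ) (u : ℕ → Fin n → ℝ) : ℕ → Fin L → Fin n → ℝ
  | 0 => fun l j => ∑ i, U01 l i * Km i j
  | m + 1 => fun l j =>
      ∑ i, (psihatM L n KL Km U01 u m l i * KL l i) * u m i * Km i j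

/-- Backward matrix messages counted from the end: `Ψ_{T−1} = U^{(0,T)} Kᵀ` and
`Ψ_t = (Ψ_{t+1} ⊙ K_L) diag(u_{t+1}) Kᵀ` (here, for a tensor with marginals
`0,1,…,T+2` and middle scalings `u₀,…,u_{T−1}`, `psiM m = Ψ_{T+1−m}`). -/
def psiM (L n : ℕ) (KL : Fin L → Fin n → ℝ) (Km : Matrix (Fin n) (Fin n) ℝ)
    (U0T : Fin L → Fin n → ℝ) (u : ℕ → Fin n → ℝ) (T : ℕ) : ℕ → Fin L → Fin n → ℝ
  | 0 => fun l j => ∑ i, U0T l i * Km j i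
  | m + 1 => fun l j =>
      ∑ i, (psiM L n KL Km U0T u T m l i * KL l i) * u (T - 1 - m) i * Km j i

/-- The multi-commodity structured tensor `K ⊙ U`, with commodity index
`i₀ = l ∈ Fin L` and path indices `x : Fin (T+2) → Fin n`:
`K_{i₀…} = (∏ middle t, (K_L)_{i₀ i_t}) (∏ consecutive, K_{i_t i_{t+1}})` and
`U_{i₀…} = U^{(0,1)}_{i₀ i₁} U^{(0,T)}_{i₀ i_T} ∏ middle t, (u_t)_{i_t}`. -/
def KU (L n T : ℕ) (KL : Fin L → Fin n → ℝ) (Km : Matrix (Fin n) (Fin n) ℝ)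
    (U01 U0T : Fin L → Fin n → ℝ) (u : ℕ → Fin n → ℝ)
    (l : Fin L) (x : Fin (T + 2) → Fin n) : ℝ :=
  ((∏ t : Fin T, KL l (x t.succ.castSucc)) *
      ∏ s : Fin (T + 1), Km (x s.castSucc) (x s.succ)) *
    (U01 l (x 0) * U0T l (x (Fin.last (T + 1))) *
      ∏ t : Fin T, u t.val (x t.succ.castSucc))


def Bm (n : ℕ) (E : Fin n → Fin n → ℝ) : ℕ → (ℕ → Fin n → ℝ) → Fin n → ℝ
  | 0, _, _ => 1
  | m + 1, w, s => ∑ i, E s i * w 0 i * Bm n E m (fun k => w (k + 1)) i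

def Fm (n : ℕ) (E : Fin n → Fin n → ℝ) : ℕ → (ℕ → Fin n → ℝ) → Fin n → Fin n → ℝ
  | 0, _, s, j => E s j
  | m + 1, w, s, j => ∑ i, E s i * w 0 i * Fm n E m (fun k => w (k + 1)) i j

lemma Bm_congr {n : ℕ} (E : Fin n → Fin n → ℝ) :
    ∀ (m : ℕ) (w w' : ℕ → Fin n → ℝ), (∀ k, k < m → w k = w' k) →
      ∀ s, Bm n E m w s = Bm n E m w' s
  | 0, _, _, _, _ => rfl
  | m + 1, w, w', h, s => by
      simp only [Bm]
      refine Finset.sum_congr rfl fun i _ => ?_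
      rw [h 0 (by omega),
        Bm_congr E m (fun k => w (k + 1)) (fun k => w' (k + 1))
          (fun k hk => h (k + 1) (by omega)) i]

lemma Fm_congr {n : ℕ} (E : Fin n → Fin n → ℝ) :
    ∀ (m : ℕ) (w w' : ℕ → Fin n → ℝ), (∀ k, k < m → w k = w' k) →
      ∀ s j, Fm n E m w s j = Fm n E m w' s j
  | 0, _, _, _, _, _ => rfl
  | m + 1, w, w', h, s, j => by
      simp only [Fm]
      refine Finset.sum_congr rfl fun i _ => ?_
      rw [h 0 (by omega),
        Fm_congr E m (fun k => w (k + 1)) (fun k => w' (k + 1))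
          (fun k hk => h (k + 1) (by omega)) i j]

lemma Fm_succ_right {n : ℕ} (E : Fin n → Fin n → ℝ) :
    ∀ (m : ℕ) (w : ℕ → Fin n → ℝ) (s j : Fin n),
      Fm n E (m + 1) w s j = ∑ i, Fm n E m w s i * w m i * E i j := by
  intro m
  induction m with
  | zero =>
    intro w s j
    simp only [Fm]
  | succ m ih =>
    intro w s j
    have key : ∀ i0, Fm n E (m + 1) (fun k => w (k + 1)) i0 j
        = ∑ i, Fm n E m (fun k => w (k + 1)) i0 i * w (m + 1) i * E i j :=
      fun i0 => ih _ i0 j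
    have R : (∑ i, Fm n E (m + 1) w s i * w (m + 1) i * E i j)
        = ∑ i, (∑ i0, E s i0 * w 0 i0 * Fm n E m (fun k => w (k + 1)) i0 i) * w (m + 1) i
            * E i j := by
      refine Finset.sum_congr rfl fun i _ => ?_
      conv_lhs => rw [show Fm n E (m + 1) w s i
        = ∑ i0, E s i0 * w 0 i0 * Fm n E m (fun k => w (k + 1)) i0 i from rfl]
    rw [R]
    conv_lhs => rw [show Fm n E (m + 1 + 1) w s j
      = ∑ i0, E s i0 * w 0 i0 * Fm n E (m + 1) (fun k => w (k + 1)) i0 j from rfl]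
    simp only [key, Finset.mul_sum, Finset.sum_mul]
    rw [Finset.sum_comm]
    exact Finset.sum_congr rfl fun i _ => Finset.sum_congr rfl fun i0 _ => by ring


lemma sum_cons {n : ℕ} (m : ℕ) (f : (Fin (m + 1) → Fin n) → ℝ) :
    ∑ x : Fin (m + 1) → Fin n, f x
      = ∑ x0 : Fin n, ∑ y : Fin m → Fin n, f (Fin.cons x0 y) := by
  rw [← Equiv.sum_comp (Fin.consEquiv fun _ => Fin n) f, Fintype.sum_prod_type]
  rfl

lemma prod_w_cons {n : ℕ} (m : ℕ) (w : ℕ → Fin n → ℝ) (x0 : Fin n)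
    (y : Fin (m + 1) → Fin n) :
    (∏ t : Fin (m + 2), w t.val ((Fin.cons x0 y : Fin (m + 2) → Fin n) t))
      = w 0 x0 * ∏ t : Fin (m + 1), w (t.val + 1) (y t) := by
  rw [Fin.prod_univ_succ]
  simp [Fin.cons_succ]

lemma prod_E_cons {n : ℕ} (E : Fin n → Fin n → ℝ) (m : ℕ) (x0 : Fin n)
    (y : Fin (m + 1) → Fin n) :
    (∏ e : Fin (m + 1), E ((Fin.cons x0 y : Fin (m + 2) → Fin n) e.castSucc) ((Fin.cons x0 y : Fin (m + 2) → Fin n) e.succ))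
      = E x0 (y 0) * ∏ e : Fin m, E (y e.castSucc) (y e.succ) := by
  rw [Fin.prod_univ_succ]
  have h1 : ∀ e : Fin m, E ((Fin.cons x0 y : Fin (m + 2) → Fin n) e.succ.castSucc)
      ((Fin.cons x0 y : Fin (m + 2) → Fin n) e.succ.succ) = E (y e.castSucc) (y e.succ) := by
    intro e
    rw [← Fin.succ_castSucc]
    simp [Fin.cons_succ]
  simp only [h1]
  congr 1

end Stmt12

namespace Stmt12

lemma sum_SB {n : ℕ} (E : Fin n → Fin n → ℝ) :
    ∀ (m : ℕ) (w : ℕ → Fin n → ℝ) (s : Fin n),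
    (∑ y : Fin (m + 1) → Fin n,
        E s (y 0) * ((∏ t : Fin (m + 1), w t.val (y t)) *
          ∏ e : Fin m, E (y e.castSucc) (y e.succ)))
      = Bm n E (m + 1) w s := by
  intro m
  induction m with
  | zero =>
    intro w s
    rw [sum_cons]
    simp [Bm]
  | succ m ih =>
    intro w s
    rw [sum_cons]
    simp only [prod_w_cons, prod_E_cons, Fin.cons_zero]
    rw [show Bm n E (m + 1 + 1) w s
      = ∑ i, E s i * w 0 i * Bm n E (m + 1) (fun k => w (k + 1)) i from rfl]
    refine Finset.sum_congr rfl fun x0 _ => ?_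
    rw [← ih (fun k => w (k + 1)) x0, Finset.mul_sum]
    exact Finset.sum_congr rfl fun y _ => by ring


lemma sourced {n : ℕ} (E : Fin n → Fin n → ℝ) (m : ℕ) :
    ∀ (k : ℕ) (hk : k < m + 1) (w : ℕ → Fin n → ℝ) (s j : Fin n),
    (∑ x : Fin (m + 1) → Fin n,
        if x ⟨k, hk⟩ = j then
          E s (x 0) * ((∏ t : Fin (m + 1), w t.val (x t)) *
            ∏ e : Fin m, E (x e.castSucc) (x e.succ)) else 0)
      = Fm n E k w s j * w k j * Bm n E (m - k) (fun r => w (k + 1 + r)) j := by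
  induction m with
  | zero =>
    intro k hk w s j
    interval_cases k
    rw [sum_cons]
    simp only [Fin.cons_zero]
    have hone : ∀ x0 : Fin n, ∀ y : Fin 0 → Fin n,
        (∏ t : Fin 1, w t.val ((Fin.cons x0 y : Fin 1 → Fin n) t)) = w 0 x0 := by
      intro x0 y; simp
    simp only [hone]
    simp [Fm, Bm, Finset.sum_ite_eq', mul_comm]
  | succ m ih =>
    intro k hk w s j
    match k, hk with
    | 0, hk =>
      rw [sum_cons]
      have hc : ∀ x0 : Fin n, ∀ y : Fin (m + 1) → Fin n,
          (Fin.cons x0 y : Fin (m + 2) → Fin n) ⟨0, hk⟩ = x0 := fun _ _ => rfl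
      simp only [hc, Fin.cons_zero, prod_w_cons, prod_E_cons]
      have step : ∀ x0 : Fin n,
          (∑ y : Fin (m + 1) → Fin n,
            if x0 = j then
              E s x0 * ((w 0 x0 * ∏ t : Fin (m + 1), w (t.val + 1) (y t)) *
                (E x0 (y 0) * ∏ e : Fin m, E (y e.castSucc) (y e.succ))) else 0)
          = if x0 = j then
              E s j * w 0 j * Bm n E (m + 1) (fun r => w (r + 1)) j else 0 := by
        intro x0
        by_cases h : x0 = j
        · subst h
          simp only [eq_self_iff_true, if_true]
          rw [← sum_SB E m (fun r => w (r + 1)) x0, Finset.mul_sum]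
          exact Finset.sum_congr rfl fun y _ => by ring
        · simp [h]
      simp only [step]
      rw [Finset.sum_ite_eq' Finset.univ j
        (fun _ => E s j * w 0 j * Bm n E (m + 1) (fun r => w (r + 1)) j)]
      simp only [Finset.mem_univ, if_true]
      rw [Bm_congr E (m + 1 - 0) (fun r => w (0 + 1 + r)) (fun r => w (r + 1))
        (fun r _ => by
          show w (0 + 1 + r) = w (r + 1)
          have h01 : 0 + 1 + r = r + 1 := by omega
          rw [h01]) j]
      rw [show m + 1 - 0 = m + 1 from rfl]
      show _ = E s j * w 0 j * Bm n E (m + 1) (fun r => w (r + 1)) j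
      ring
    | k + 1, hk =>
      have hk' : k < m + 1 := by omega
      rw [sum_cons]
      have hc : ∀ x0 : Fin n, ∀ y : Fin (m + 1) → Fin n,
          (Fin.cons x0 y : Fin (m + 2) → Fin n) ⟨k + 1, hk⟩ = y ⟨k, hk'⟩ := by
        intro x0 y
        rw [show (⟨k + 1, hk⟩ : Fin (m + 2)) = (⟨k, hk'⟩ : Fin (m + 1)).succ from rfl,
          Fin.cons_succ]
      simp only [hc, Fin.cons_zero, prod_w_cons, prod_E_cons]
      have inner : ∀ x0 : Fin n,
          (∑ y : Fin (m + 1) → Fin n,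
            if y ⟨k, hk'⟩ = j then
              E s x0 * ((w 0 x0 * ∏ t : Fin (m + 1), w (t.val + 1) (y t)) *
                (E x0 (y 0) * ∏ e : Fin m, E (y e.castSucc) (y e.succ))) else 0)
          = E s x0 * w 0 x0 * (Fm n E k (fun r => w (r + 1)) x0 j * w (k + 1) j *
              Bm n E (m - k) (fun r => w (k + 1 + r + 1)) j) := by
        intro x0
        rw [← ih k hk' (fun r => w (r + 1)) x0 j, Finset.mul_sum]
        exact Finset.sum_congr rfl fun y _ => by split_ifs <;> ring
      simp only [inner]
      rw [Bm_congr E (m - k) (fun r => w (k + 1 + r + 1)) (fun r => w (k + 1 + 1 + r))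
        (fun r _ => by
          show w (k + 1 + r + 1) = w (k + 1 + 1 + r)
          have hr : k + 1 + r + 1 = k + 1 + 1 + r := by omega
          rw [hr]) j]
      rw [show Fm n E (k + 1) w s j
        = ∑ i, E s i * w 0 i * Fm n E k (fun r => w (r + 1)) i j from rfl]
      rw [Finset.sum_mul, Finset.sum_mul]
      rw [show m + 1 - (k + 1) = m - k from by omega]
      exact Finset.sum_congr rfl fun x0 _ => by ring


lemma psihatM_eq (L n : ℕ) (KL : Fin L → Fin n → ℝ) (Km : Matrix (Fin n) (Fin n) ℝ)
    (U01 : Fin L → Fin n → ℝ) (u : ℕ → Fin n → ℝ) :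
    ∀ (m : ℕ) (l : Fin L) (j : Fin n),
      psihatM L n KL Km U01 u m l j
        = ∑ i, U01 l i * Fm n Km m (fun k i => KL l i * u k i) i j := by
  intro m
  induction m with
  | zero => intro l j; simp [psihatM, Fm]
  | succ m ih =>
    intro l j
    rw [show psihatM L n KL Km U01 u (m + 1) l j
      = ∑ i, (psihatM L n KL Km U01 u m l i * KL l i) * u m i * Km i j from rfl]
    simp only [ih, Fm_succ_right Km, Finset.sum_mul, Finset.mul_sum]
    rw [Finset.sum_comm]
    exact Finset.sum_congr rfl fun i _ => Finset.sum_congr rfl fun i0 _ => by ring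

lemma psiM_eq (L n T : ℕ) (KL : Fin L → Fin n → ℝ) (Km : Matrix (Fin n) (Fin n) ℝ)
    (U0T : Fin L → Fin n → ℝ) (u : ℕ → Fin n → ℝ) :
    ∀ (m : ℕ), m ≤ T → ∀ (l : Fin L) (j : Fin n),
      psiM L n KL Km U0T u T m l j
        = Bm n Km (m + 1)
            (fun k i => if k < m then KL l i * u (T - m + k) i else U0T l i) j := by
  intro m
  induction m with
  | zero =>
    intro _ l j
    show (∑ i, U0T l i * Km j i) = ∑ i, Km j i * _ * 1
    exact Finset.sum_congr rfl fun i _ => by simp; ring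
  | succ m ih =>
    intro hm l j
    have hm' : m ≤ T := by omega
    rw [show psiM L n KL Km U0T u T (m + 1) l j
      = ∑ i, (psiM L n KL Km U0T u T m l i * KL l i) * u (T - 1 - m) i * Km j i from rfl]
    rw [show Bm n Km (m + 1 + 1)
          (fun k i => if k < m + 1 then KL l i * u (T - (m + 1) + k) i else U0T l i) j
        = ∑ i, Km j i * (if 0 < m + 1 then KL l i * u (T - (m + 1) + 0) i else U0T l i) *
            Bm n Km (m + 1)
              (fun k i => if k + 1 < m + 1 then KL l i * u (T - (m + 1) + (k + 1)) i
                else U0T l i) i from rfl]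
    refine Finset.sum_congr rfl fun i _ => ?_
    rw [ih hm' l i]
    rw [Bm_congr Km (m + 1)
      (fun k i => if k + 1 < m + 1 then KL l i * u (T - (m + 1) + (k + 1)) i else U0T l i)
      (fun k i => if k < m then KL l i * u (T - m + k) i else U0T l i)
      (fun k hk => by
        funext i
        beta_reduce
        by_cases h : k < m
        · rw [if_pos (by omega), if_pos h]
          congr 2
          omega
        · rw [if_neg (by omega), if_neg h]) i]
    rw [if_pos (by omega : 0 < m + 1)]
    rw [show T - (m + 1) + 0 = T - 1 - m from by omega]
    ring


def wf (L n T : ℕ) (KL : Fin L → Fin n → ℝ) (U01 U0T : Fin L → Fin n → ℝ)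
    (u : ℕ → Fin n → ℝ) (l : Fin L) : ℕ → Fin n → ℝ :=
  fun k i => if k = 0 then U01 l i else if k ≤ T then KL l i * u (k - 1) i else U0T l i

lemma KU_eq (L n T : ℕ) (KL : Fin L → Fin n → ℝ) (Km : Matrix (Fin n) (Fin n) ℝ)
    (U01 U0T : Fin L → Fin n → ℝ) (u : ℕ → Fin n → ℝ) (l : Fin L)
    (x : Fin (T + 2) → Fin n) :
    KU L n T KL Km U01 U0T u l x
      = (∏ t : Fin (T + 2), wf L n T KL U01 U0T u l t.val (x t)) *
          ∏ e : Fin (T + 1), Km (x e.castSucc) (x e.succ) := by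
  have h0 : wf L n T KL U01 U0T u l (0 : Fin (T + 2)).val (x 0) = U01 l (x 0) := by
    simp [wf]
  have hmid : ∀ t : Fin T,
      wf L n T KL U01 U0T u l ((t.castSucc).succ : Fin (T + 2)).val (x (t.castSucc).succ)
        = KL l (x t.succ.castSucc) * u t.val (x t.succ.castSucc) := by
    intro t
    rw [← Fin.succ_castSucc]
    have hi : ((t.castSucc.succ : Fin (T + 2))).val = t.val + 1 := by simp
    rw [hi, wf, if_neg (by omega), if_pos (Nat.succ_le_of_lt t.isLt)]
    simp
  have hlast : wf L n T KL U01 U0T u l ((Fin.last T).succ : Fin (T + 2)).val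
      (x (Fin.last T).succ) = U0T l (x (Fin.last (T + 1))) := by
    rw [Fin.succ_last]
    have : ((Fin.last (T + 1)) : Fin (T + 2)).val = T + 1 := rfl
    rw [this, wf, if_neg (by omega), if_neg (by omega)]
  rw [Fin.prod_univ_succ (f := fun t : Fin (T + 2) => wf L n T KL U01 U0T u l t.val (x t))]
  rw [Fin.prod_univ_castSucc
    (f := fun t : Fin (T + 1) => wf L n T KL U01 U0T u l (t.succ : Fin (T + 2)).val (x t.succ))]
  rw [h0, hlast]
  rw [Finset.prod_congr rfl fun t _ => hmid t]
  rw [Finset.prod_mul_distrib]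
  rw [KU]
  ring


/-- Bi-marginal projections of the multi-commodity structured tensor:
`P_{0,1}(K⊙U) = U^{(0,1)} ⊙ Ψ₁`, `P_{0,T}(K⊙U) = U^{(0,T)} ⊙ Ψ̂_T`, and
`P_{0,t}(K⊙U) = (Ψ̂_t ⊙ Ψ_t ⊙ K_L) diag(u_t)` for middle marginals `t`. -/
theorem stmt_12 (L n T : ℕ) (KL : Fin L → Fin n → ℝ)
    (Km : Matrix (Fin n) (Fin n) ℝ) (U01 U0T : Fin L → Fin n → ℝ)
    (u : ℕ → Fin n → ℝ) (hKL : ∀ l i, 0 ≤ KL l i) (hKm : ∀ i j, 0 ≤ Km i j)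
    (hU01 : ∀ l i, 0 ≤ U01 l i) (hU0T : ∀ l i, 0 ≤ U0T l i)
    (hu : ∀ s i, 0 ≤ u s i) :
    (∀ (l : Fin L) (j : Fin n),
      (∑ x : Fin (T + 2) → Fin n,
          if x 0 = j then KU L n T KL Km U01 U0T u l x else 0)
        = U01 l j * psiM L n KL Km U0T u T T l j) ∧
    (∀ (l : Fin L) (j : Fin n),
      (∑ x : Fin (T + 2) → Fin n,
          if x (Fin.last (T + 1)) = j then KU L n T KL Km U01 U0T u l x else 0)
        = U0T l j * psihatM L n KL Km U01 u T l j) ∧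
    (∀ (t : Fin T) (l : Fin L) (j : Fin n),
      (∑ x : Fin (T + 2) → Fin n,
          if x t.succ.castSucc = j then KU L n T KL Km U01 U0T u l x else 0)
        = psihatM L n KL Km U01 u t.val l j *
            psiM L n KL Km U0T u T (T - 1 - t.val) l j * KL l j * u t.val j) := by
  have hW0 : ∀ (l : Fin L) (i : Fin n), wf L n T KL U01 U0T u l 0 i = U01 l i := by
    intro l i; simp [wf]
  have hWmid : ∀ (l : Fin L) (k : ℕ), k + 1 ≤ T → ∀ i : Fin n,
      wf L n T KL U01 U0T u l (k + 1) i = KL l i * u k i := by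
    intro l k hk i
    rw [wf]
    beta_reduce
    rw [if_neg (by omega), if_pos hk]
    simp
  have hWlast : ∀ (l : Fin L) (i : Fin n), wf L n T KL U01 U0T u l (T + 1) i = U0T l i := by
    intro l i
    rw [wf]
    beta_reduce
    rw [if_neg (by omega), if_neg (by omega)]
  -- congruence from the shifted `wf` weights to the `psiM` weights
  have hBmPsi : ∀ (l : Fin L) (j : Fin n),
      Bm n Km (T + 1) (fun r => wf L n T KL U01 U0T u l (r + 1)) j
        = psiM L n KL Km U0T u T T l j := by
    intro l j
    rw [psiM_eq L n T KL Km U0T u T le_rfl l j]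
    refine Bm_congr Km (T + 1) _ _ (fun k hk => ?_) j
    funext i
    beta_reduce
    by_cases h : k < T
    · rw [hWmid l k (by omega) i, if_pos h,
        show T - T + k = k from by omega]
    · have hkT : k = T := by omega
      rw [hkT] at h ⊢
      rw [hWlast l i, if_neg h]
  refine ⟨?_, ?_, ?_⟩
  · -- first marginal: pin at position 0
    intro l j
    simp only [KU_eq]
    rw [sum_cons]
    simp only [Fin.cons_zero, prod_w_cons, prod_E_cons Km]
    have step : ∀ x0 : Fin n,
        (∑ y : Fin (T + 1) → Fin n,
          if x0 = j then
            (wf L n T KL U01 U0T u l 0 x0 *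
                ∏ t : Fin (T + 1), wf L n T KL U01 U0T u l (t.val + 1) (y t)) *
              (Km x0 (y 0) * ∏ e : Fin T, Km (y e.castSucc) (y e.succ)) else 0)
        = if x0 = j then
            wf L n T KL U01 U0T u l 0 j *
              Bm n Km (T + 1) (fun r => wf L n T KL U01 U0T u l (r + 1)) j else 0 := by
      intro x0
      by_cases h : x0 = j
      · subst h
        simp only [eq_self_iff_true, if_true]
        rw [← sum_SB Km T (fun r => wf L n T KL U01 U0T u l (r + 1)) x0, Finset.mul_sum]
        exact Finset.sum_congr rfl fun y _ => by ring
      · simp [h]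
    simp only [step]
    rw [Finset.sum_ite_eq' Finset.univ j
      (fun _ => wf L n T KL U01 U0T u l 0 j *
        Bm n Km (T + 1) (fun r => wf L n T KL U01 U0T u l (r + 1)) j)]
    simp only [Finset.mem_univ, if_true]
    rw [hW0 l j, hBmPsi l j]
  · -- second marginal: pin at the last position
    intro l j
    simp only [KU_eq]
    rw [sum_cons]
    have hT1 : T < T + 1 := Nat.lt_succ_self T
    have hc : ∀ (x0 : Fin n) (y : Fin (T + 1) → Fin n),
        (Fin.cons x0 y : Fin (T + 2) → Fin n) (Fin.last (T + 1)) = y ⟨T, hT1⟩ := by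
      intro x0 y
      rw [show (Fin.last (T + 1) : Fin (T + 2)) = (⟨T, hT1⟩ : Fin (T + 1)).succ from rfl,
        Fin.cons_succ]
    simp only [hc, Fin.cons_zero, prod_w_cons, prod_E_cons Km]
    have inner : ∀ x0 : Fin n,
        (∑ y : Fin (T + 1) → Fin n,
          if y ⟨T, hT1⟩ = j then
            (wf L n T KL U01 U0T u l 0 x0 *
                ∏ t : Fin (T + 1), wf L n T KL U01 U0T u l (t.val + 1) (y t)) *
              (Km x0 (y 0) * ∏ e : Fin T, Km (y e.castSucc) (y e.succ)) else 0)
        = wf L n T KL U01 U0T u l 0 x0 *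
            (Fm n Km T (fun r => wf L n T KL U01 U0T u l (r + 1)) x0 j *
              wf L n T KL U01 U0T u l (T + 1) j *
              Bm n Km (T - T) (fun r => wf L n T KL U01 U0T u l (T + 1 + r + 1)) j) := by
      intro x0
      rw [← sourced Km T T hT1 (fun r => wf L n T KL U01 U0T u l (r + 1)) x0 j,
        Finset.mul_sum]
      exact Finset.sum_congr rfl fun y _ => by split_ifs <;> ring
    simp only [inner]
    have hBm1 : Bm n Km (T - T)
        (fun r => wf L n T KL U01 U0T u l (T + 1 + r + 1)) j = 1 := by
      rw [Nat.sub_self]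
      rfl
    have hFmc : ∀ x0 : Fin n,
        Fm n Km T (fun r => wf L n T KL U01 U0T u l (r + 1)) x0 j
          = Fm n Km T (fun k i => KL l i * u k i) x0 j := by
      intro x0
      refine Fm_congr Km T _ _ (fun k hk => ?_) x0 j
      funext i
      exact hWmid l k (by omega) i
    simp only [hBm1, hFmc, hW0, hWlast]
    rw [psihatM_eq L n KL Km U01 u T l j, Finset.mul_sum]
    exact Finset.sum_congr rfl fun x0 _ => by ring
  · -- middle marginals
    intro t l j
    simp only [KU_eq]
    rw [sum_cons]
    have hk' : t.val < T + 1 := by omega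
    have hc : ∀ (x0 : Fin n) (y : Fin (T + 1) → Fin n),
        (Fin.cons x0 y : Fin (T + 2) → Fin n) t.succ.castSucc = y ⟨t.val, hk'⟩ := by
      intro x0 y
      rw [show (t.succ.castSucc : Fin (T + 2)) = (⟨t.val, hk'⟩ : Fin (T + 1)).succ from rfl,
        Fin.cons_succ]
    simp only [hc, Fin.cons_zero, prod_w_cons, prod_E_cons Km]
    have inner : ∀ x0 : Fin n,
        (∑ y : Fin (T + 1) → Fin n,
          if y ⟨t.val, hk'⟩ = j then
            (wf L n T KL U01 U0T u l 0 x0 *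
                ∏ s : Fin (T + 1), wf L n T KL U01 U0T u l (s.val + 1) (y s)) *
              (Km x0 (y 0) * ∏ e : Fin T, Km (y e.castSucc) (y e.succ)) else 0)
        = wf L n T KL U01 U0T u l 0 x0 *
            (Fm n Km t.val (fun r => wf L n T KL U01 U0T u l (r + 1)) x0 j *
              wf L n T KL U01 U0T u l (t.val + 1) j *
              Bm n Km (T - t.val)
                (fun r => wf L n T KL U01 U0T u l (t.val + 1 + r + 1)) j) := by
      intro x0
      rw [← sourced Km T t.val hk' (fun r => wf L n T KL U01 U0T u l (r + 1)) x0 j,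
        Finset.mul_sum]
      exact Finset.sum_congr rfl fun y _ => by split_ifs <;> ring
    simp only [inner]
    have ht : t.val < T := t.isLt
    have hFmc : ∀ x0 : Fin n,
        Fm n Km t.val (fun r => wf L n T KL U01 U0T u l (r + 1)) x0 j
          = Fm n Km t.val (fun k i => KL l i * u k i) x0 j := by
      intro x0
      refine Fm_congr Km t.val _ _ (fun k hk => ?_) x0 j
      funext i
      exact hWmid l k (by omega) i
    have hmidj : wf L n T KL U01 U0T u l (t.val + 1) j = KL l j * u t.val j :=
      hWmid l t.val (by omega) j
    have hBmc : Bm n Km (T - t.val)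
        (fun r => wf L n T KL U01 U0T u l (t.val + 1 + r + 1)) j
          = psiM L n KL Km U0T u T (T - 1 - t.val) l j := by
      rw [psiM_eq L n T KL Km U0T u (T - 1 - t.val) (by omega) l j]
      rw [show T - t.val = (T - 1 - t.val) + 1 from by omega]
      refine Bm_congr Km ((T - 1 - t.val) + 1) _ _ (fun k hk => ?_) j
      funext i
      beta_reduce
      by_cases h : k < T - 1 - t.val
      · rw [hWmid l (t.val + 1 + k) (by omega) i, if_pos h,
          show t.val + 1 + k = T - (T - 1 - t.val) + k from by omega]
      · rw [show t.val + 1 + k + 1 = T + 1 from by omega, hWlast l i, if_neg h]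
    simp only [hFmc, hmidj, hBmc, hW0]
    rw [psihatM_eq L n KL Km U01 u t.val l j, Finset.sum_mul, Finset.sum_mul,
      Finset.sum_mul]
    exact Finset.sum_congr rfl fun x0 _ => by ring

end Stmt12
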